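/- Fix any real λ > 1 and τ > φ(λ). For each integer N ≥ 2, let x(N) denote the unique fixed point in [φ(λ), +∞) of the map x ↦ τ − (N−1)·h(x; λ). Then x(N) → φ(λ) as N → +∞. -/

import Mathlib

/-- `phi l = log (l / (l - 1))` for `l > 1`. -/
noncomputable def phi (l : ℝ) : ℝ := Real.log (l / (l - 1))

/-- `h x l = (1/l) * log ((l - 1) * (exp x - 1))`. -/
noncomputable def h (x l : ℝ) : ℝ := (1 / l) * Real.log ((l - 1) * (Real.exp x - 1))

/-!
The map `h(·; λ)` is an explicit bijection from `[φ(λ), ∞)` onto `[0, ∞)`, with continuous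
inverse `y ↦ log (1 + exp (λ y) / (λ - 1))` sending `0` to `φ(λ)`. The fixed point equation gives
`(N - 1) · h(x(N); λ) = τ - x(N) ≤ τ - φ(λ)`, so `h(x(N); λ) → 0`, and applying the inverse yields
`x(N) → φ(λ)`.
-/

open Filter Topology Real

noncomputable def hInv (l y : ℝ) : ℝ := log (1 + exp (l * y) / (l - 1))

section

variable {l x : ℝ}

lemma exp_phi (hl : 1 < l) : exp (phi l) = l / (l - 1) := by
  rw [phi, exp_log (div_pos (by linarith) (by linarith))]

lemma phi_pos (hl : 1 < l) : 0 < phi l :=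
  log_pos ((one_lt_div (by linarith)).mpr (by linarith))

lemma h_nonneg (hl : 1 < l) (hx : phi l ≤ x) : 0 ≤ h x l := by
  have h_one_le : 1 ≤ (l - 1) * (exp x - 1) := by
    have hexp : l / (l - 1) ≤ exp x := exp_phi hl ▸ exp_le_exp.mpr hx
    rw [div_le_iff₀ (by linarith)] at hexp
    nlinarith
  exact mul_nonneg (by positivity) (log_nonneg h_one_le)

lemma hInv_h (hl : 1 < l) (hx : 0 < x) : hInv l (h x l) = x := by
  have hpos : 0 < (l - 1) * (exp x - 1) :=
    mul_pos (by linarith) (by linarith [add_one_lt_exp hx.ne'])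
  have hlh : l * h x l = log ((l - 1) * (exp x - 1)) := by
    rw [h, ← mul_assoc, mul_one_div_cancel (by linarith), one_mul]
  rw [hInv, hlh, exp_log hpos, mul_div_cancel_left₀ _ (by linarith), add_sub_cancel, log_exp]

lemma hInv_zero (hl : l ≠ 1) : hInv l 0 = phi l := by
  have hl' : l - 1 ≠ 0 := sub_ne_zero.mpr hl
  rw [hInv, phi, mul_zero, exp_zero]
  congr 1
  field_simp
  ring

lemma continuous_hInv (hl : 1 < l) : Continuous (hInv l) :=
  Continuous.log (by fun_prop) fun y => (add_pos one_pos (div_pos (exp_pos _) (by linarith))).ne'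

end

lemma tendsto_zero_of_nonneg_of_sub_one_mul_le {a : ℕ → ℝ} {C : ℝ}
    (h0 : ∀ᶠ N in atTop, 0 ≤ a N) (hC : ∀ᶠ N : ℕ in atTop, ((N : ℝ) - 1) * a N ≤ C) :
    Tendsto a atTop (𝓝 0) := by
  have hbound : Tendsto (fun N : ℕ => C / ((N : ℝ) - 1)) atTop (𝓝 0) :=
    tendsto_const_nhds.div_atTop (tendsto_atTop_add_const_right _ _ tendsto_natCast_atTop_atTop)
  refine tendsto_of_tendsto_of_tendsto_of_le_of_le' tendsto_const_nhds hbound h0 ?_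
  filter_upwards [hC, eventually_ge_atTop 2] with N hN hN2
  have hpos : (0 : ℝ) < N - 1 := by
    have : (2 : ℝ) ≤ N := by exact_mod_cast hN2
    linarith
  rw [le_div_iff₀ hpos, mul_comm]
  exact hN

theorem fixed_point_tendsto_phi_general {l τ : ℝ} (hl : 1 < l)
    (x : ℕ → ℝ) (hx : ∀ N, 2 ≤ N → x N ∈ Set.Ici (phi l) ∧
      τ - ((N : ℝ) - 1) * h (x N) l = x N) :
    Filter.Tendsto x Filter.atTop (nhds (phi l)) := by
  have hx' := eventually_atTop.mpr ⟨2, hx⟩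
  have hh : Tendsto (fun N => h (x N) l) atTop (𝓝 0) := by
    refine tendsto_zero_of_nonneg_of_sub_one_mul_le (C := τ - phi l) ?_ ?_
    · filter_upwards [hx'] with N hN using h_nonneg hl hN.1
    · filter_upwards [hx'] with N hN
      linarith [hN.1.out]
  have hlim := (continuous_hInv hl).tendsto 0 |>.comp hh
  rw [hInv_zero hl.ne'] at hlim
  refine hlim.congr' ?_
  filter_upwards [hx'] with N hN
  exact hInv_h hl ((phi_pos hl).trans_le hN.1)

/-- the fixed points `x(N)` of `x ↦ τ − (N−1)·h(x; λ)` on `[φ(λ), ∞)`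
converge to `φ(λ)` as `N → ∞`. -/
theorem fixed_point_tendsto_phi {l τ : ℝ} (hl : 1 < l) (hτ : phi l < τ)
    (x : ℕ → ℝ) (hx : ∀ N, 2 ≤ N → x N ∈ Set.Ici (phi l) ∧
      τ - ((N : ℝ) - 1) * h (x N) l = x N) :
    Filter.Tendsto x Filter.atTop (nhds (phi l)) :=
  fixed_point_tendsto_phi_general hl x hx
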